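/- arXiv:2302.11530 — 2 statements merged into one kernel-verified Lean document; each statement's English description precedes it below -/
import Mathlib

section
/- Consider n agents with binary supermodular cost functions c_1, ..., c_n on a set of m chores, with c_i(∅) = 0. Let r_i(S) = |S| - c_i(S) be the associated matroid rank functions and let r̂ be the rank function of the union of the corresponding matroids. Then the minimum over all partitions (A_1,...,A_n) of [m] of the total cost ∑_i c_i(A_i) equals m - r̂([m]). -/
/-- `A` is a partition (complete allocation) of the chores `Fin m` among `n` agents. -/
def IsPartition {n m : ℕ} (A : Fin n → Finset (Fin m)) : Prop :=
  (∀ i j : Fin n, i ≠ j → Disjoint (A i) (A j)) ∧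
    Finset.univ.biUnion A = (Finset.univ : Finset (Fin m))

/-- Binary marginals for a nonnegative-integer-valued cost function. -/
def BinaryMarginals {m : ℕ} (c : Finset (Fin m) → ℕ) : Prop :=
  ∀ (S : Finset (Fin m)) (a : Fin m), a ∉ S →
    c (insert a S) = c S ∨ c (insert a S) = c S + 1

/-- Supermodularity (increasing marginals), in addition form. -/
def Supermod {m : ℕ} (c : Finset (Fin m) → ℕ) : Prop :=
  ∀ (S T : Finset (Fin m)) (a : Fin m), S ⊆ T → a ∉ T →
    c (insert a S) + c T ≤ c (insert a T) + c S

/-- `T` is independent in the union of the matroids `M i` associated with the binary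
supermodular costs `c i` (where `S` is independent in `M i`, whose rank function is
`r i S = |S| - c i S`, exactly when `c i S = 0`). -/
def UnionIndep {n m : ℕ} (c : Fin n → Finset (Fin m) → ℕ) (T : Finset (Fin m)) : Prop :=
  ∃ I : Fin n → Finset (Fin m), (∀ i, c i (I i) = 0) ∧ T = Finset.univ.biUnion I

lemma bm_le_union {m : ℕ} {c : Finset (Fin m) → ℕ} (hm : BinaryMarginals c)
    (S U : Finset (Fin m)) : c S ≤ c (S ∪ U) := by
  induction U using Finset.induction with
  | empty => simp
  | @insert a U haU ih =>
    rw [Finset.union_insert]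
    by_cases h : a ∈ S ∪ U
    · rwa [Finset.insert_eq_self.2 h]
    · rcases hm (S ∪ U) a h with h1 | h1 <;> omega

lemma bm_mono {m : ℕ} {c : Finset (Fin m) → ℕ} (hm : BinaryMarginals c)
    {S T : Finset (Fin m)} (h : S ⊆ T) : c S ≤ c T := by
  have := bm_le_union hm S T
  rwa [Finset.union_eq_right.2 h] at this

lemma bm_card_bound {m : ℕ} {c : Finset (Fin m) → ℕ} (hm : BinaryMarginals c)
    (S U : Finset (Fin m)) : c (S ∪ U) ≤ c S + U.card := by
  induction U using Finset.induction with
  | empty => simp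
  | @insert a U haU ih =>
    rw [Finset.union_insert, Finset.card_insert_of_notMem haU]
    by_cases h : a ∈ S ∪ U
    · rw [Finset.insert_eq_self.2 h]; omega
    · rcases hm (S ∪ U) a h with h1 | h1 <;> omega

lemma supermod_zero {m : ℕ} {c : Finset (Fin m) → ℕ} (hm : BinaryMarginals c)
    (hs : Supermod c) (hz : c ∅ = 0) {S : Finset (Fin m)}
    (h : ∀ a ∈ S, c (S.erase a) = c S) : c S = 0 := by
  have key : ∀ U : Finset (Fin m), c (S \ U) = c S := by
    intro U
    induction U using Finset.induction with
    | empty => simp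
    | @insert a U haU ih' =>
      by_cases haS : a ∈ S
      · have haSU : a ∈ S \ U := Finset.mem_sdiff.2 ⟨haS, haU⟩
        have hsub : (S \ U).erase a ⊆ S.erase a :=
          Finset.erase_subset_erase a (Finset.sdiff_subset)
        have hsup := hs ((S \ U).erase a) (S.erase a) a hsub (Finset.notMem_erase a S)
        rw [Finset.insert_erase haSU, Finset.insert_erase haS, h a haS] at hsup
        have hmono : c ((S \ U).erase a) ≤ c (S \ U) :=
          bm_mono hm (Finset.erase_subset a _)
        have heq : S \ insert a U = (S \ U).erase a := by
          ext x; simp [Finset.mem_sdiff, Finset.mem_erase, Finset.mem_insert]; tauto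
        rw [heq]
        omega
      · have : S \ insert a U = S \ U := by
          ext x; simp [Finset.mem_sdiff, Finset.mem_insert]
          intro hx hxu he
          exact haS (he ▸ hx)
        rw [this, ih']
  have := key S
  rw [Finset.sdiff_self] at this
  omega

lemma extract_indep {m : ℕ} {c : Finset (Fin m) → ℕ} (hm : BinaryMarginals c)
    (hs : Supermod c) (hz : c ∅ = 0) (S : Finset (Fin m)) :
    ∃ J : Finset (Fin m), J ⊆ S ∧ c J = 0 ∧ J.card + c S = S.card := by
  induction S using Finset.strongInductionOn with
  | _ S ih =>
    by_cases h : c S = 0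
    · exact ⟨S, subset_rfl, h, by omega⟩
    · have hex : ∃ a ∈ S, c (S.erase a) + 1 = c S := by
        by_contra hcon
        push_neg at hcon
        apply h
        apply supermod_zero hm hs hz
        intro a ha
        have h1 := hm (S.erase a) a (Finset.notMem_erase a S)
        rw [Finset.insert_erase ha] at h1
        have := hcon a ha
        omega
      obtain ⟨a, ha, hca⟩ := hex
      obtain ⟨J, hJs, hJ0, hJc⟩ := ih (S.erase a) (Finset.erase_ssubset ha)
      refine ⟨J, hJs.trans (Finset.erase_subset a S), hJ0, ?_⟩
      have hce := Finset.card_erase_of_mem ha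
      have hcp : 1 ≤ S.card := Finset.card_pos.2 ⟨a, ha⟩
      omega

/-- for binary supermodular costs, the minimum social cost over all complete
allocations equals `m - r̂([m])`, where `r̂([m])` is the rank of the ground set in the
union matroid. -/
theorem min_social_cost_eq (n m : ℕ) (hn : 1 ≤ n)
    (c : Fin n → Finset (Fin m) → ℕ)
    (hmarg : ∀ i, BinaryMarginals (c i)) (hsuper : ∀ i, Supermod (c i))
    (h0 : ∀ i, c i ∅ = 0)
    (rhat : ℕ)
    (hrhat : IsGreatest {s : ℕ | ∃ T : Finset (Fin m), UnionIndep c T ∧ s = T.card} rhat) :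
    IsLeast {s : ℤ | ∃ A : Fin n → Finset (Fin m), IsPartition A ∧
        s = ∑ i, (c i (A i) : ℤ)} ((m : ℤ) - (rhat : ℤ)) := by
  -- lower bound: every partition costs at least m - rhat
  have lb : ∀ A : Fin n → Finset (Fin m), IsPartition A →
      (m : ℤ) - (rhat : ℤ) ≤ ∑ i, (c i (A i) : ℤ) := by
    intro A ⟨hdisj, hcover⟩
    choose J hJsub hJ0 hJcard using fun i => extract_indep (hmarg i) (hsuper i) (h0 i) (A i)
    have hJdisj : ∀ i ∈ Finset.univ, ∀ j ∈ Finset.univ, (i:Fin n) ≠ j →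
        Disjoint (J i) (J j) := fun i _ j _ hij =>
      (hdisj i j hij).mono (hJsub i) (hJsub j)
    have hT'card : (Finset.univ.biUnion J).card = ∑ i, (J i).card :=
      Finset.card_biUnion hJdisj
    have hAcard : ∑ i, (A i).card = m := by
      have := Finset.card_biUnion (s := (Finset.univ : Finset (Fin n))) (t := A)
        (fun i _ j _ hij => hdisj i j hij)
      rw [hcover] at this
      simpa using this.symm
    have hle : (Finset.univ.biUnion J).card ≤ rhat :=
      hrhat.2 ⟨Finset.univ.biUnion J, ⟨J, hJ0, rfl⟩, rfl⟩
    have hsum : ∑ i, (J i).card + ∑ i, c i (A i) = m := by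
      rw [← Finset.sum_add_distrib]
      calc ∑ x, ((J x).card + c x (A x)) = ∑ x, (A x).card :=
            Finset.sum_congr rfl fun i _ => hJcard i
        _ = m := hAcard
    have : (∑ i, (c i (A i) : ℤ)) = ((∑ i, c i (A i) : ℕ) : ℤ) := by push_cast; ring
    rw [this]
    omega
  -- construct an optimal partition
  obtain ⟨T, ⟨I, hI0, hTI⟩, hTcard⟩ := hrhat.1
  set J : Fin n → Finset (Fin m) := fun i => I i \ (Finset.Iio i).biUnion I with hJdef
  have hJI : ∀ i, J i ⊆ I i := fun i => Finset.sdiff_subset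
  have hJ0 : ∀ i, c i (J i) = 0 := fun i =>
    Nat.le_zero.1 (hI0 i ▸ bm_mono (hmarg i) (hJI i))
  have hJdisj : ∀ i j : Fin n, i ≠ j → Disjoint (J i) (J j) := by
    have key : ∀ i j : Fin n, i < j → Disjoint (J i) (J j) := by
      intro i j hij
      have h1 : J i ⊆ (Finset.Iio j).biUnion I := fun x hx =>
        Finset.mem_biUnion.2 ⟨i, Finset.mem_Iio.2 hij, hJI i hx⟩
      exact (Finset.sdiff_disjoint.mono_right h1).symm
    intro i j hij
    rcases lt_or_gt_of_ne hij with h | h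
    · exact key i j h
    · exact (key j i h).symm
  have hJunion : Finset.univ.biUnion J = T := by
    ext x
    simp only [Finset.mem_biUnion, Finset.mem_univ, true_and]
    constructor
    · rintro ⟨i, hx⟩
      rw [hTI]
      exact Finset.mem_biUnion.2 ⟨i, Finset.mem_univ i, hJI i hx⟩
    · intro hxT
      rw [hTI] at hxT
      obtain ⟨i, _, hxi⟩ := Finset.mem_biUnion.1 hxT
      have hne : (Finset.univ.filter (fun i => x ∈ I i)).Nonempty :=
        ⟨i, Finset.mem_filter.2 ⟨Finset.mem_univ i, hxi⟩⟩
      set i0 := (Finset.univ.filter (fun i => x ∈ I i)).min' hne with hi0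
      have hxi0 : x ∈ I i0 :=
        (Finset.mem_filter.1 ((Finset.univ.filter (fun i => x ∈ I i)).min'_mem hne)).2
      refine ⟨i0, Finset.mem_sdiff.2 ⟨hxi0, ?_⟩⟩
      intro hmem
      obtain ⟨j, hj, hxj⟩ := Finset.mem_biUnion.1 hmem
      have : i0 ≤ j := Finset.min'_le _ j (Finset.mem_filter.2 ⟨Finset.mem_univ j, hxj⟩)
      exact absurd (Finset.mem_Iio.1 hj) (not_lt.2 this)
  -- the partition
  set z : Fin n := ⟨0, hn⟩ with hz
  set A : Fin n → Finset (Fin m) := fun i => if i = z then J z ∪ Tᶜ else J i with hA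
  have hJT : ∀ i, J i ⊆ T := fun i x hx => by
    rw [← hJunion]; exact Finset.mem_biUnion.2 ⟨i, Finset.mem_univ i, hx⟩
  have hApart : IsPartition A := by
    constructor
    · intro i j hij
      have hJc : ∀ k, Disjoint (J k) Tᶜ := fun k =>
        disjoint_compl_right.mono_left (hJT k)
      have hAz : A z = J z ∪ Tᶜ := by simp [hA]
      have hAne : ∀ k, k ≠ z → A k = J k := fun k hk => by simp [hA, hk]
      by_cases hi : i = z
      · subst hi
        rw [hAz, hAne j (Ne.symm hij)]
        exact Finset.disjoint_union_left.2 ⟨hJdisj z j hij, (hJc j).symm⟩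
      · by_cases hj : j = z
        · subst hj
          rw [hAz, hAne i hi]
          exact Finset.disjoint_union_right.2 ⟨hJdisj i z hij, hJc i⟩
        · rw [hAne i hi, hAne j hj]
          exact hJdisj i j hij
    · ext x
      simp only [Finset.mem_biUnion, Finset.mem_univ, true_and, iff_true]
      by_cases hxT : x ∈ T
      · rw [← hJunion] at hxT
        obtain ⟨i, _, hxi⟩ := Finset.mem_biUnion.1 hxT
        refine ⟨i, ?_⟩
        have hAz : A z = J z ∪ Tᶜ := by simp [hA]
        have hAne : ∀ k, k ≠ z → A k = J k := fun k hk => by simp [hA, hk]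
        by_cases hi : i = z
        · subst hi
          rw [hAz]
          exact Finset.mem_union_left _ hxi
        · rw [hAne i hi]; exact hxi
      · refine ⟨z, ?_⟩
        have hAz : A z = J z ∪ Tᶜ := by simp [hA]
        rw [hAz]
        exact Finset.mem_union_right _ (Finset.mem_compl.2 hxT)
  -- cost of this partition
  have hcost : ∑ i, c i (A i) ≤ m - rhat := by
    have hsplit : ∑ i, c i (A i) = c z (A z) + ∑ i ∈ Finset.univ.erase z, c i (A i) :=
      (Finset.add_sum_erase _ _ (Finset.mem_univ z)).symm
    have hrest : ∑ i ∈ Finset.univ.erase z, c i (A i) = 0 := by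
      apply Finset.sum_eq_zero
      intro i hi
      have hiz : i ≠ z := (Finset.mem_erase.1 hi).1
      have : A i = J i := by simp [hA, hiz]
      rw [this]
      exact hJ0 i
    have hz0 : c z (A z) ≤ m - rhat := by
      have : A z = J z ∪ Tᶜ := by simp [hA]
      rw [this]
      calc c z (J z ∪ Tᶜ) ≤ c z (J z) + Tᶜ.card := bm_card_bound (hmarg z) _ _
        _ = Tᶜ.card := by rw [hJ0 z]; omega
        _ = m - rhat := by rw [Finset.card_compl, ← hTcard]; simp
    omega
  have hrm : rhat ≤ m := by
    rw [hTcard]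
    simpa using Finset.card_le_card (Finset.subset_univ T)
  constructor
  · refine ⟨A, hApart, ?_⟩
    have h1 := lb A hApart
    have h2 : (∑ i, (c i (A i) : ℤ)) = ((∑ i, c i (A i) : ℕ) : ℤ) := by push_cast; ring
    rw [h2] at h1 ⊢
    omega
  · rintro s ⟨B, hB, rfl⟩
    exact lb B hB
end

section
/- Let c_1,...,c_n be binary supermodular cost functions on [m] with c_i(∅)=0, with associated matroids M_i (rank functions r_i(S)=|S|-c_i(S)). Let B = B_1 ∪ ... ∪ B_n be a basis of the union matroid with each B_i independent in M_i and the B_i pairwise disjoint. Then every complete partition (B̄_1,...,B̄_n) of [m] with B_i ⊆ B̄_i for all i achieves the minimum social cost: ∑_i c_i(B̄_i) = min over all partitions of [m] of ∑_i c_i(A_i). -/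
/-!
With `r_i(S) = |S| - c_i(S)`, every allocation `A` has social cost `m - ∑ r_i(A_i)`. Binary
marginals make `r_i` monotone, so an extension `B̄` of `B` has `∑ r_i(B̄_i) ≥ ∑ |B_i| ≥ r̂`.
Supermodularity makes `r_i(A_i)` the size of an independent subset of `A_i`; for a partition these
subsets are disjoint and form an independent set of the union matroid, so `∑ r_i(A_i) ≤ r̂`.
-/

open Finset

namespace BinaryMarginals

variable {m : ℕ} {c : Finset (Fin m) → ℕ}

theorem le_add_card_union (hc : BinaryMarginals c) (S U : Finset (Fin m)) :
    c (S ∪ U) ≤ c S + U.card := by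
  induction U using Finset.induction_on with
  | empty => simp
  | insert a U haU ih =>
    rw [union_insert, card_insert_of_notMem haU]
    by_cases ha : a ∈ S ∪ U
    · rw [insert_eq_of_mem ha]
      omega
    · rcases hc (S ∪ U) a ha with h | h <;> omega

theorem add_card_le_add_card (hc : BinaryMarginals c) {S T : Finset (Fin m)} (hST : S ⊆ T) :
    c T + S.card ≤ c S + T.card := by
  have h := hc.le_add_card_union S (T \ S)
  rw [union_sdiff_of_subset hST] at h
  have := card_sdiff_add_card_eq_card hST
  omega

end BinaryMarginals

namespace Supermod

variable {m : ℕ} {c : Finset (Fin m) → ℕ}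

/-- By supermodularity, the marginal of `a` on any subset of `S.erase a` is at most its marginal
on `S.erase a` itself, which is zero. -/
theorem eq_zero_of_forall_erase (hc : Supermod c) (h0 : c ∅ = 0) {S : Finset (Fin m)}
    (hS : ∀ a ∈ S, c (S.erase a) = c S) : c S = 0 := by
  suffices ∀ U ⊆ S, c U = 0 from this S subset_rfl
  intro U
  induction U using Finset.induction_on with
  | empty => exact fun _ => h0
  | insert a U haU ih =>
    intro hUS
    obtain ⟨haS, hUS⟩ := insert_subset_iff.mp hUS
    have h := hc U (S.erase a) a (subset_erase.mpr ⟨hUS, haU⟩) (notMem_erase a S)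
    rw [insert_erase haS, hS a haS, ih hUS] at h
    omega

theorem exists_subset_cost_eq_zero_card_add_eq (hc : Supermod c) (hm : BinaryMarginals c)
    (h0 : c ∅ = 0) (S : Finset (Fin m)) :
    ∃ I ⊆ S, c I = 0 ∧ I.card + c S = S.card := by
  induction S using Finset.strongInduction with
  | H S ih =>
    by_cases hS : c S = 0
    · exact ⟨S, subset_rfl, hS, by omega⟩
    obtain ⟨a, ha, hca⟩ : ∃ a ∈ S, c (S.erase a) + 1 = c S := by
      by_contra! h
      refine hS (hc.eq_zero_of_forall_erase h0 fun a ha => ?_)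
      have := hm (S.erase a) a (notMem_erase a S)
      rw [insert_erase ha] at this
      have := h a ha
      omega
    obtain ⟨I, hIS, hI, hIcard⟩ := ih (S.erase a) (erase_ssubset ha)
    have := card_erase_add_one ha
    exact ⟨I, hIS.trans (erase_subset a S), hI, by omega⟩

end Supermod

namespace IsPartition

variable {n m : ℕ} {A : Fin n → Finset (Fin m)}

theorem sum_card (hA : IsPartition A) : ∑ i, (A i).card = m := by
  rw [← card_biUnion fun i _ j _ hij => hA.1 i j hij, hA.2, card_univ, Fintype.card_fin]

theorem sum_cost_add_card_biUnion_le {c : Fin n → Finset (Fin m) → ℕ}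
    (hmarg : ∀ i, BinaryMarginals (c i)) (hA : IsPartition A) {B : Fin n → Finset (Fin m)}
    (hB : ∀ i, c i (B i) = 0) (hBA : ∀ i, B i ⊆ A i) :
    ∑ i, c i (A i) + (univ.biUnion B).card ≤ m :=
  calc ∑ i, c i (A i) + (univ.biUnion B).card
      ≤ ∑ i, (c i (A i) + (B i).card) := by
        rw [sum_add_distrib]
        exact Nat.add_le_add_left card_biUnion_le _
    _ ≤ ∑ i, (A i).card := sum_le_sum fun i _ => by
        simpa [hB i] using (hmarg i).add_card_le_add_card (hBA i)
    _ = m := hA.sum_card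

theorem card_le_sum_cost_add {c : Fin n → Finset (Fin m) → ℕ}
    (hmarg : ∀ i, BinaryMarginals (c i)) (hsuper : ∀ i, Supermod (c i)) (h0 : ∀ i, c i ∅ = 0)
    (hA : IsPartition A) {r : ℕ} (hr : ∀ T, UnionIndep c T → T.card ≤ r) :
    m ≤ ∑ i, c i (A i) + r := by
  choose I hIA hI hIcard using fun i =>
    (hsuper i).exists_subset_cost_eq_zero_card_add_eq (hmarg i) (h0 i) (A i)
  have hIr : ∑ i, (I i).card ≤ r := by
    rw [← card_biUnion fun i _ j _ hij => (hA.1 i j hij).mono (hIA i) (hIA j)]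
    exact hr _ ⟨I, hI, rfl⟩
  calc m = ∑ i, ((I i).card + c i (A i)) := by simp only [hIcard, hA.sum_card]
    _ = ∑ i, (I i).card + ∑ i, c i (A i) := sum_add_distrib
    _ ≤ ∑ i, c i (A i) + r := by omega

end IsPartition

theorem extension_of_basis_minimizes_social_cost_general (n m : ℕ)
    (c : Fin n → Finset (Fin m) → ℕ)
    (hmarg : ∀ i, BinaryMarginals (c i)) (hsuper : ∀ i, Supermod (c i))
    (h0 : ∀ i, c i ∅ = 0)
    (rhat : ℕ)
    (hrhat : IsGreatest {s : ℕ | ∃ T : Finset (Fin m), UnionIndep c T ∧ s = T.card} rhat)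
    (B : Fin n → Finset (Fin m))
    (hBindep : ∀ i, c i (B i) = 0)
    (hBbasis : (Finset.univ.biUnion B).card = rhat)
    (Bbar : Fin n → Finset (Fin m)) (hBbar : IsPartition Bbar)
    (hext : ∀ i, B i ⊆ Bbar i) :
    IsLeast {s : ℕ | ∃ A : Fin n → Finset (Fin m), IsPartition A ∧ s = ∑ i, c i (A i)}
      (∑ i, c i (Bbar i)) := by
  refine ⟨⟨Bbar, hBbar, rfl⟩, ?_⟩
  rintro _ ⟨A, hA, rfl⟩
  have hupper := hBbar.sum_cost_add_card_biUnion_le hmarg hBindep hext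
  have hlower := hA.card_le_sum_cost_add hmarg hsuper h0 fun T hT => hrhat.2 ⟨T, hT, rfl⟩
  omega

/-- if `B = B 1 ∪ … ∪ B n` is a basis of the union matroid, with the `B i`
pairwise disjoint and each `B i` independent in `M i`, then every complete allocation
extending `(B 1, …, B n)` achieves the minimum social cost. -/
theorem extension_of_basis_minimizes_social_cost (n m : ℕ) (hn : 1 ≤ n)
    (c : Fin n → Finset (Fin m) → ℕ)
    (hmarg : ∀ i, BinaryMarginals (c i)) (hsuper : ∀ i, Supermod (c i))
    (h0 : ∀ i, c i ∅ = 0)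
    (rhat : ℕ)
    (hrhat : IsGreatest {s : ℕ | ∃ T : Finset (Fin m), UnionIndep c T ∧ s = T.card} rhat)
    (B : Fin n → Finset (Fin m))
    (hBdisj : ∀ i j : Fin n, i ≠ j → Disjoint (B i) (B j))
    (hBindep : ∀ i, c i (B i) = 0)
    (hBbasis : (Finset.univ.biUnion B).card = rhat)
    (Bbar : Fin n → Finset (Fin m)) (hBbar : IsPartition Bbar)
    (hext : ∀ i, B i ⊆ Bbar i) :
    IsLeast {s : ℕ | ∃ A : Fin n → Finset (Fin m), IsPartition A ∧ s = ∑ i, c i (A i)}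
      (∑ i, c i (Bbar i)) :=
  extension_of_basis_minimizes_social_cost_general n m c hmarg hsuper h0 rhat hrhat B hBindep
    hBbasis Bbar hBbar hext
end
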